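/- arXiv:1611.04399 — 5 statements merged into one kernel-verified Lean document; each statement's English description precedes it below -/
import Mathlib

section
/- Let G = (V,E) be a finite connected graph and y ∈ {0,1}^E. Then y satisfies the cycle inequalities (for every cycle C of G and every e ∈ C: y_e ≤ ∑_{e'∈C∖{e}} y_{e'}) if and only if there exists a map μ : V → ℕ such that for every edge {v,w} ∈ E, y_{vw} = 0 iff μ(v) = μ(w), and such that each level set μ^{-1}(m) induces a connected subgraph of G. -/
/-!
Write `H` for the subgraph of edges with `y = 0`. If the cycle inequalities hold, every edge
`vw` with `y_{vw} = 1` joins different components of `H`: otherwise `vw` closes an `H`-path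
into a cycle on which the inequality at `vw` reads `1 ≤ 0`. So labelling vertices by their
`H`-component gives `μ`, and its level sets are components of `H`, hence connected.
Conversely, on a cycle whose edges other than `e` all have `y = 0`, `μ` is constant along the
path `C ∖ e`, so `μ` agrees at the ends of `e` and `y_e = 0`.
-/

open SimpleGraph

namespace SimpleGraph.Walk

variable {V α : Type*} {G : SimpleGraph V} {f : V → α}

theorem apply_eq_of_forall_isDiag_map {a b : V} (p : G.Walk a b)
    (h : ∀ e ∈ p.edges, (e.map f).IsDiag) : f a = f b := by
  induction p with
  | nil => rfl
  | cons _ q ih =>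
    simp only [edges_cons, List.mem_cons, forall_eq_or_imp, Sym2.map_mk,
      Sym2.mk_isDiag_iff] at h
    exact h.1.trans (ih h.2)

theorem map_eq_of_forall_isDiag_map_erase [DecidableEq V] {a b : V} (p : G.Walk a b)
    {e : Sym2 V} (he : e ∈ p.edges) (h : ∀ e' ∈ p.edges.erase e, (e'.map f).IsDiag) :
    s(f a, f b) = e.map f := by
  induction p with
  | nil => simp at he
  | @cons u v w _ q ih =>
    by_cases hfirst : s(u, v) = e
    · subst hfirst
      rw [edges_cons, List.erase_cons_head] at h
      rw [Sym2.map_mk, q.apply_eq_of_forall_isDiag_map h]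
    · rw [edges_cons, List.erase_cons_tail (by simpa using hfirst)] at h
      simp only [List.mem_cons, forall_eq_or_imp, Sym2.map_mk, Sym2.mk_isDiag_iff] at h
      have he' : e ∈ q.edges := (List.mem_cons.1 he).resolve_left (Ne.symm hfirst)
      rw [h.1, ih he' h.2]

theorem apply_eq_of_forall_isDiag_map_erase [DecidableEq V] {u x z : V} (c : G.Walk u u)
    (he : s(x, z) ∈ c.edges) (h : ∀ e' ∈ c.edges.erase s(x, z), (e'.map f).IsDiag) :
    f x = f z := by
  have := c.map_eq_of_forall_isDiag_map_erase he h
  rw [Sym2.map_mk, Sym2.eq_iff] at this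
  grind

end SimpleGraph.Walk

namespace SimpleGraph

variable {V : Type*} [DecidableEq V] {G : SimpleGraph V} {y : Sym2 V → ℕ}

def CycleInequalities (G : SimpleGraph V) (y : Sym2 V → ℕ) : Prop :=
  ∀ (u : V) (c : G.Walk u u), c.IsCycle →
    ∀ e ∈ c.edges, y e ≤ ((c.edges.erase e).map y).sum

theorem CycleInequalities.eq_zero_of_reachable_deleteEdges (hcyc : CycleInequalities G y)
    {v w : V} (hadj : G.Adj v w) (hreach : (G.deleteEdges {e | y e ≠ 0}).Reachable v w) :
    y s(v, w) = 0 := by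
  by_contra hne
  obtain ⟨p, hp⟩ := hreach.exists_isPath
  have hle := G.deleteEdges_le {e | y e ≠ 0}
  have hzero : ∀ e ∈ (p.mapLe hle).edges, y e = 0 := by
    intro e he
    rw [Walk.edges_mapLe_eq_edges] at he
    have := p.edges_subset_edgeSet he
    rw [edgeSet_deleteEdges] at this
    simpa using this.2
  have hcycle : (Walk.cons hadj.symm (p.mapLe hle)).IsCycle :=
    (Walk.cons_isCycle_iff _ _).2
      ⟨hp.mapLe hle, fun hmem => hne (by rw [Sym2.eq_swap]; exact hzero _ hmem)⟩
  have hineq := hcyc w _ hcycle s(w, v) (by simp)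
  have hsum : ((p.mapLe hle).edges.map y).sum = 0 :=
    List.sum_eq_zero (by simpa using hzero)
  rw [Walk.edges_cons, List.erase_cons_head, hsum, Nat.le_zero, Sym2.eq_swap] at hineq
  exact hne hineq

theorem CycleInequalities.exists_connected_levels [Finite V] (hcyc : CycleInequalities G y) :
    ∃ μ : V → ℕ, (∀ v w, G.Adj v w → (y s(v, w) = 0 ↔ μ v = μ w)) ∧
      ∀ m ∈ Set.range μ, (G.induce {v | μ v = m}).Connected := by
  set H := G.deleteEdges {e | y e ≠ 0}
  obtain ⟨label, hlabel⟩ := Countable.exists_injective_nat H.ConnectedComponent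
  refine ⟨fun v => label (H.connectedComponentMk v), fun v w hadj => ?_, ?_⟩
  · rw [hlabel.eq_iff, ConnectedComponent.eq]
    refine ⟨fun h0 => Adj.reachable ?_, hcyc.eq_zero_of_reachable_deleteEdges hadj⟩
    simpa [H] using ⟨hadj, h0⟩
  · rintro _ ⟨v, rfl⟩
    have hlevel : {w | label (H.connectedComponentMk w) = label (H.connectedComponentMk v)} =
        (H.connectedComponentMk v).supp := by
      ext w
      simp [hlabel.eq_iff]
    rw [hlevel]
    exact (H.connectedComponentMk v).connected_toSimpleGraph.mono
      fun _ _ h => G.deleteEdges_le _ h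

theorem cycleInequalities_of_adj_eq_zero_iff {α : Type*} (hy : ∀ e, y e ≤ 1) (μ : V → α)
    (hμ : ∀ v w, G.Adj v w → (y s(v, w) = 0 ↔ μ v = μ w)) : CycleInequalities G y := by
  intro u c _ e he
  induction e using Sym2.ind with
  | _ x z =>
    by_cases hsum : ((c.edges.erase s(x, z)).map y).sum = 0
    · have hflat : ∀ e' ∈ c.edges.erase s(x, z), (e'.map μ).IsDiag := by
        intro e' he'
        induction e' using Sym2.ind with
        | _ a b =>
          have hab := c.adj_of_mem_edges (List.mem_of_mem_erase he')
          have hy0 := List.sum_eq_zero_iff_forall_eq_nat.1 hsum _ (List.mem_map_of_mem he')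
          exact (hμ a b hab).1 hy0
      have := (hμ x z (c.adj_of_mem_edges he)).2 (c.apply_eq_of_forall_isDiag_map_erase he hflat)
      omega
    · have := hy s(x, z)
      omega

end SimpleGraph

theorem stmt2_general (V : Type) [Fintype V] [DecidableEq V] (G : SimpleGraph V)
    (y : Sym2 V → ℕ) (hy01 : ∀ e, y e = 0 ∨ y e = 1) :
    (∀ (u : V) (c : G.Walk u u), c.IsCycle →
        ∀ e ∈ c.edges, y e ≤ ((c.edges.erase e).map y).sum)
    ↔ ∃ μ : V → ℕ,
        (∀ v w, G.Adj v w → (y s(v, w) = 0 ↔ μ v = μ w)) ∧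
        (∀ m ∈ Set.range μ, (G.induce {v | μ v = m}).Connected) :=
  ⟨CycleInequalities.exists_connected_levels,
    fun ⟨μ, hμ, _⟩ => cycleInequalities_of_adj_eq_zero_iff (fun e => by grind) μ hμ⟩

/-- a 01-vector `y` on the edges of a finite connected graph `G`
satisfies all cycle inequalities iff it is the characteristic vector of a multicut,
i.e. iff there is `μ : V → ℕ` with connected level sets such that for every edge
`{v,w}`, `y_{vw} = 0` iff `μ v = μ w`. -/
theorem stmt2 (V : Type) [Fintype V] [DecidableEq V] (G : SimpleGraph V)
    (hG : G.Connected) (y : Sym2 V → ℕ) (hy01 : ∀ e, y e = 0 ∨ y e = 1) :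
    (∀ (u : V) (c : G.Walk u u), c.IsCycle →
        ∀ e ∈ c.edges, y e ≤ ((c.edges.erase e).map y).sum)
    ↔ ∃ μ : V → ℕ,
        (∀ v w, G.Adj v w → (y s(v, w) = 0 ↔ μ v = μ w)) ∧
        (∀ m ∈ Set.range μ, (G.induce {v | μ v = m}).Connected) :=
  stmt2_general V G y hy01
end

section
/- Let G = (V,E) be a finite connected graph, G' = (V,E') with E ⊆ E', and μ : V → ℕ such that every level set μ^{-1}(m) induces a connected subgraph of G. Define y^μ ∈ {0,1}^{E'} by y^μ_{vw} = 0 iff μ(v) = μ(w). Then y^μ satisfies: (i) all cycle inequalities for cycles of G; (ii) for every {v,w} ∈ E'∖E and every vw-path P in G, y^μ_{vw} ≤ ∑_{e∈P} y^μ_e; (iii) for every {v,w} ∈ E'∖E and every vw-cut C in G, 1 − y^μ_{vw} ≤ ∑_{e∈C}(1 − y^μ_e). -/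
open Finset

/-!
Here `y e = 1` exactly when the edge `e` joins two different level sets of `μ`. A walk whose
ends lie in different level sets must leave the level set of its start, which gives the path
inequalities; a closed walk that leaves a level set along some edge has to come back along
another one, which gives the cycle inequalities. If `v` and `w` lie in the same level set,
connectivity of that level set provides a `vw`-walk all of whose edges have `y = 0`, and a cut
must contain one of them.
-/

namespace SimpleGraph.Walk

variable {V α : Type*} {G : SimpleGraph V} (μ : V → α)

lemma exists_mem_edges_map_not_isDiag {u v : V} (p : G.Walk u v) (h : μ u ≠ μ v) :
    ∃ e ∈ p.edges, ¬ (e.map μ).IsDiag := by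
  obtain ⟨d, hd, hfst, hsnd⟩ := p.exists_boundary_dart {x | μ x = μ u} rfl (Ne.symm h)
  have hfst : μ d.fst = μ u := hfst
  refine ⟨d.edge, p.edges_eq_map_darts ▸ List.mem_map_of_mem hd, ?_⟩
  simpa [Dart.edge, hfst] using Ne.symm hsnd

lemma exists_mem_edges_erase_map_not_isDiag [DecidableEq V] {u v : V} (p : G.Walk u v)
    (h : μ u = μ v) {e : Sym2 V} (he : e ∈ p.edges) (hne : ¬ (e.map μ).IsDiag) :
    ∃ f ∈ p.edges.erase e, ¬ (f.map μ).IsDiag := by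
  induction p with
  | nil => simp at he
  | @cons a b c hab q ih =>
    rw [edges_cons, List.erase_cons]
    by_cases hea : s(a, b) = e
    · subst hea
      simp only [beq_self_eq_true, if_true]
      exact q.exists_mem_edges_map_not_isDiag μ fun hbc => hne (by simp [h, hbc])
    · have he' : e ∈ q.edges := (List.mem_cons.mp he).resolve_left (Ne.symm hea)
      simp only [beq_iff_eq, hea, if_false, List.mem_cons, exists_eq_or_imp]
      by_cases hμ : μ a = μ b
      · exact Or.inr (ih (hμ ▸ h) he')
      · exact Or.inl (by simpa using hμ)

end SimpleGraph.Walk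

lemma SimpleGraph.exists_walk_forall_edges_map_isDiag {V α : Type*} {G : SimpleGraph V}
    (μ : V → α) {v w : V} (hconn : (G.induce {x | μ x = μ v}).Preconnected) (h : μ v = μ w) :
    ∃ p : G.Walk v w, ∀ e ∈ p.edges, (e.map μ).IsDiag := by
  obtain ⟨q⟩ := hconn ⟨v, rfl⟩ ⟨w, h.symm⟩
  refine ⟨q.map (Embedding.induce _).toHom, fun e he => ?_⟩
  obtain ⟨e', -, rfl⟩ := List.mem_map.mp (q.edges_map _ ▸ he)
  induction e' using Sym2.ind with
  | h a b => simpa using a.2.trans b.2.symm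

section LevelSetIndicator

variable {V α : Type*} [DecidableEq α] {μ : V → α} {y : Sym2 V → ℝ}

lemma le_sum_map_of_exists_not_isDiag (hy : ∀ e, y e = if (e.map μ).IsDiag then 0 else 1)
    {e : Sym2 V} {l : List (Sym2 V)} (h : ¬ (e.map μ).IsDiag → ∃ f ∈ l, ¬ (f.map μ).IsDiag) :
    y e ≤ (l.map y).sum := by
  have hnonneg : ∀ x ∈ l.map y, 0 ≤ x := by
    simp only [List.mem_map, forall_exists_index, and_imp, forall_apply_eq_imp_iff₂, hy]
    intro f _
    split_ifs <;> norm_num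
  by_cases he : (e.map μ).IsDiag
  · rw [hy, if_pos he]
    exact List.sum_nonneg hnonneg
  · obtain ⟨f, hf, hfd⟩ := h he
    calc y e = y f := by rw [hy, hy, if_neg he, if_neg hfd]
      _ ≤ (l.map y).sum := List.single_le_sum hnonneg _ (List.mem_map_of_mem hf)

lemma one_sub_le_sum_one_sub_of_exists_isDiag
    (hy : ∀ e, y e = if (e.map μ).IsDiag then 0 else 1) {e : Sym2 V} {C : Finset (Sym2 V)}
    (h : (e.map μ).IsDiag → ∃ f ∈ C, (f.map μ).IsDiag) :
    1 - y e ≤ ∑ f ∈ C, (1 - y f) := by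
  have hnonneg : ∀ f ∈ C, 0 ≤ 1 - y f := by
    intro f _
    rw [hy]
    split_ifs <;> norm_num
  by_cases he : (e.map μ).IsDiag
  · obtain ⟨f, hf, hfd⟩ := h he
    calc 1 - y e = 1 - y f := by rw [hy, hy, if_pos he, if_pos hfd]
      _ ≤ ∑ f ∈ C, (1 - y f) := single_le_sum hnonneg hf
  · rw [hy, if_neg he, sub_self]
    exact sum_nonneg hnonneg

end LevelSetIndicator

theorem stmt3_general (V : Type) [DecidableEq V] (G : SimpleGraph V)
    (Ep : Set (Sym2 V))
    (μ : V → ℕ)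
    (hconn : ∀ m ∈ Set.range μ, (G.induce {v | μ v = m}).Connected)
    (y : Sym2 V → ℝ) (hy : ∀ e : Sym2 V, y e = if (e.map μ).IsDiag then 0 else 1) :
    -- (i) cycle inequalities
    (∀ (u : V) (c : G.Walk u u), c.IsCycle →
        ∀ e ∈ c.edges, y e ≤ ((c.edges.erase e).map y).sum) ∧
    -- (ii) path inequalities
    (∀ v w : V, s(v, w) ∈ Ep → s(v, w) ∉ G.edgeSet →
        ∀ p : G.Walk v w, p.IsPath → y s(v, w) ≤ (p.edges.map y).sum) ∧
    -- (iii) cut inequalities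
    (∀ v w : V, s(v, w) ∈ Ep → s(v, w) ∉ G.edgeSet →
        ∀ C : Finset (Sym2 V), ↑C ⊆ G.edgeSet →
          (∀ p : G.Walk v w, ∃ e ∈ p.edges, e ∈ C) →
          1 - y s(v, w) ≤ ∑ e ∈ C, (1 - y e)) := by
  refine ⟨fun u c _ e he => ?_, fun v w _ _ p _ => ?_, fun v w _ _ C _ hcut => ?_⟩
  · exact le_sum_map_of_exists_not_isDiag hy (c.exists_mem_edges_erase_map_not_isDiag μ rfl he)
  · exact le_sum_map_of_exists_not_isDiag hy fun hvw =>
      p.exists_mem_edges_map_not_isDiag μ (by simpa using hvw)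
  · refine one_sub_le_sum_one_sub_of_exists_isDiag hy fun hvw => ?_
    obtain ⟨p, hp⟩ := G.exists_walk_forall_edges_map_isDiag μ
      (hconn _ (Set.mem_range_self v)).preconnected (by simpa using hvw)
    obtain ⟨e, hep, heC⟩ := hcut p
    exact ⟨e, heC, hp e hep⟩

/-- if `μ` has connected level sets, then `y^μ` satisfies the cycle,
path and cut inequalities defining multicuts of `G' = (V,E')` lifted from `G`. -/
theorem stmt3 (V : Type) [Fintype V] [DecidableEq V] (G : SimpleGraph V)
    (hG : G.Connected) (Ep : Set (Sym2 V)) (hE : G.edgeSet ⊆ Ep)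
    (μ : V → ℕ)
    (hconn : ∀ m ∈ Set.range μ, (G.induce {v | μ v = m}).Connected)
    (y : Sym2 V → ℝ) (hy : ∀ e : Sym2 V, y e = if (e.map μ).IsDiag then 0 else 1) :
    -- (i) cycle inequalities
    (∀ (u : V) (c : G.Walk u u), c.IsCycle →
        ∀ e ∈ c.edges, y e ≤ ((c.edges.erase e).map y).sum) ∧
    -- (ii) path inequalities
    (∀ v w : V, s(v, w) ∈ Ep → s(v, w) ∉ G.edgeSet →
        ∀ p : G.Walk v w, p.IsPath → y s(v, w) ≤ (p.edges.map y).sum) ∧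
    -- (iii) cut inequalities
    (∀ v w : V, s(v, w) ∈ Ep → s(v, w) ∉ G.edgeSet →
        ∀ C : Finset (Sym2 V), ↑C ⊆ G.edgeSet →
          (∀ p : G.Walk v w, ∃ e ∈ p.edges, e ∈ C) →
          1 - y s(v, w) ≤ ∑ e ∈ C, (1 - y e)) :=
  stmt3_general V G Ep μ hconn y hy
end

section
/- Let G = (V,E) be a finite connected graph, G' = (V,E') with E ⊆ E', and y ∈ Y_{GG'} (i.e. y satisfies the cycle, path and cut inequalities defining lifted multicuts). Then for every {v,w} ∈ E', y_{vw} = 0 if and only if there exists a vw-path in G all of whose edges e satisfy y_e = 0. -/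
open Finset

/-- if `y ∈ Y_{GG'}` (01-values, cycle, path and cut inequalities), then
for every `{v,w} ∈ E'`, `y_{vw} = 0` iff there is a `vw`-path in `G` all of whose
edges `e` satisfy `y_e = 0`. -/
theorem stmt4 (V : Type) [Fintype V] [DecidableEq V] (G : SimpleGraph V)
    (hG : G.Connected) (Ep : Set (Sym2 V)) (hE : G.edgeSet ⊆ Ep)
    (hloopless : ∀ e ∈ Ep, ¬ e.IsDiag)
    (y : Sym2 V → ℝ)
    (hy01 : ∀ e ∈ Ep, y e = 0 ∨ y e = 1)
    (hcycle : ∀ (u : V) (c : G.Walk u u), c.IsCycle →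
        ∀ e ∈ c.edges, y e ≤ ((c.edges.erase e).map y).sum)
    (hpath : ∀ v w : V, s(v, w) ∈ Ep → s(v, w) ∉ G.edgeSet →
        ∀ p : G.Walk v w, p.IsPath → y s(v, w) ≤ (p.edges.map y).sum)
    (hcut : ∀ v w : V, s(v, w) ∈ Ep → s(v, w) ∉ G.edgeSet →
        ∀ C : Finset (Sym2 V), ↑C ⊆ G.edgeSet →
          (∀ p : G.Walk v w, ∃ e ∈ p.edges, e ∈ C) →
          1 - y s(v, w) ≤ ∑ e ∈ C, (1 - y e)) :
    ∀ v w : V, s(v, w) ∈ Ep →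
      (y s(v, w) = 0 ↔ ∃ p : G.Walk v w, ∀ e ∈ p.edges, y e = 0) := by
  classical
  intro v w hmem
  constructor
  · intro hy0
    by_cases hedge : s(v, w) ∈ G.edgeSet
    · -- single edge walk
      have hadj : G.Adj v w := hedge
      refine ⟨SimpleGraph.Walk.cons hadj SimpleGraph.Walk.nil, ?_⟩
      intro e he
      simp only [SimpleGraph.Walk.edges_cons, SimpleGraph.Walk.edges_nil,
        List.mem_singleton] at he
      subst he; exact hy0
    · -- use the cut inequality
      by_contra hno
      push_neg at hno
      set C : Finset (Sym2 V) :=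
        Finset.univ.filter (fun e => e ∈ G.edgeSet ∧ y e ≠ 0) with hC
      have hCsub : ↑C ⊆ G.edgeSet := by
        intro e he
        simp only [hC, Finset.coe_filter, Set.mem_setOf_eq] at he
        exact he.2.1
      have hCcut : ∀ p : G.Walk v w, ∃ e ∈ p.edges, e ∈ C := by
        intro p
        by_contra hnone
        push_neg at hnone
        obtain ⟨e, he, hne⟩ := hno p
        have hes : e ∈ G.edgeSet := p.edges_subset_edgeSet he
        have := hnone e he
        simp only [hC, Finset.mem_filter, Finset.mem_univ, true_and, not_and,
          not_not] at this
        exact hne (this hes)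
      have h := hcut v w hmem hedge C hCsub hCcut
      have hsum : ∑ e ∈ C, (1 - y e) = 0 := by
        apply Finset.sum_eq_zero
        intro e he
        simp only [hC, Finset.mem_filter, Finset.mem_univ, true_and] at he
        rcases hy01 e (hE he.1) with h0 | h1
        · exact absurd h0 he.2
        · rw [h1]; ring
      rw [hy0, hsum] at h
      linarith
  · rintro ⟨p, hp⟩
    set q := p.toPath with hq
    have hq0 : ∀ e ∈ (q : G.Walk v w).edges, y e = 0 := fun e he =>
      hp e (SimpleGraph.Walk.edges_toPath_subset p he)
    by_cases hedge : s(v, w) ∈ G.edgeSet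
    · by_cases hin : s(v, w) ∈ (q : G.Walk v w).edges
      · exact hq0 _ hin
      · -- form a cycle
        have hadj : G.Adj w v := (G.mem_edgeSet.mp hedge).symm
        have hnin : s(w, v) ∉ (q : G.Walk v w).edges := by
          rwa [Sym2.eq_swap]
        have hcyc : (SimpleGraph.Walk.cons hadj (q : G.Walk v w)).IsCycle :=
          SimpleGraph.Path.cons_isCycle q hadj hnin
        have hec : s(w, v) ∈ (SimpleGraph.Walk.cons hadj (q : G.Walk v w)).edges := by
          simp [SimpleGraph.Walk.edges_cons]
        have h := hcycle w _ hcyc s(w, v) hec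
        have herase : (SimpleGraph.Walk.cons hadj (q : G.Walk v w)).edges.erase s(w, v)
            = (q : G.Walk v w).edges := by
          simp [SimpleGraph.Walk.edges_cons, List.erase_cons_head]
        rw [herase] at h
        have hsum : (((q : G.Walk v w).edges).map y).sum = 0 := by
          apply List.sum_eq_zero
          intro x hx
          rcases List.mem_map.mp hx with ⟨e, he, rfl⟩
          exact hq0 e he
        rw [hsum] at h
        rw [Sym2.eq_swap] at h
        rcases hy01 _ hmem with h0 | h1
        · exact h0
        · rw [h1] at h; linarith
    · have h := hpath v w hmem hedge (q : G.Walk v w) q.2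
      have hsum : (((q : G.Walk v w).edges).map y).sum = 0 := by
        apply List.sum_eq_zero
        intro x hx
        rcases List.mem_map.mp hx with ⟨e, he, rfl⟩
        exact hq0 e he
      rw [hsum] at h
      rcases hy01 _ hmem with h0 | h1
      · exact h0
      · rw [h1] at h; linarith
end

section
/- Let (G, G', c') be an instance of the minimum cost lifted multicut problem, and let (G, G', H, L, c, c^∼, c^≁) be the NL-LMP instance with L = {1}, c = 0, c^∼ = 0, and c^≁_{vw,11} = c'_{vw} for all (v,w) ∈ A. Then for any y ∈ {0,1}^{E'}, y minimizes ∑_{e∈E'} c'_e y_e over Y_{GG'} if and only if (1_{V×L}, y) minimizes the NL-LMP objective φ over X_{VL} × Y_{GG'}. -/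
open Finset

/-- `y` minimizes `∑_{e∈E'} c'_e y_e` over the lifted multicut polytope
`Y_{GG'}` iff `(1_{V×L}, y)` minimizes the NL-LMP objective with `L = {1}`, `c = 0`,
`c^∼ = 0` and `c^≁_{vw,11} = c'_{vw}` over `X_{VL} × Y_{GG'}`. -/
theorem stmt7 (V : Type) [Fintype V] [DecidableEq V] (G : SimpleGraph V)
    (hG : G.Connected) (Ep : Finset (Sym2 V)) (hE : G.edgeSet ⊆ ↑Ep)
    (A : Finset (V × V))
    (hA1 : ∀ v w : V, s(v, w) ∈ Ep ↔ ((v, w) ∈ A ∨ (w, v) ∈ A))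
    (hA2 : ∀ v w : V, ¬((v, w) ∈ A ∧ (w, v) ∈ A))
    (hA3 : ∀ a ∈ A, a.1 ≠ a.2)
    (c' : Sym2 V → ℝ)
    (Y : Set (Sym2 V → ℝ))
    (hY : Y = {y | (∀ e ∈ Ep, y e = 0 ∨ y e = 1) ∧
      (∀ (u : V) (cw : G.Walk u u), cw.IsCycle →
        ∀ e ∈ cw.edges, y e ≤ ((cw.edges.erase e).map y).sum) ∧
      (∀ v w : V, s(v, w) ∈ Ep → s(v, w) ∉ G.edgeSet →
        ∀ p : G.Walk v w, p.IsPath → y s(v, w) ≤ (p.edges.map y).sum) ∧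
      (∀ v w : V, s(v, w) ∈ Ep → s(v, w) ∉ G.edgeSet →
        ∀ C : Finset (Sym2 V), ↑C ⊆ G.edgeSet →
          (∀ p : G.Walk v w, ∃ e ∈ p.edges, e ∈ C) →
          1 - y s(v, w) ≤ ∑ e ∈ C, (1 - y e))})
    (X : Set (V → PUnit → ℝ))
    (hX : X = {x | (∀ v l, x v l = 0 ∨ x v l = 1) ∧ ∀ v, ∑ l, x v l = 1})
    (c : V → PUnit → ℝ) (hc : c = 0)
    (cj : V × V → PUnit → PUnit → ℝ) (hcj : cj = 0)
    (cc : V × V → PUnit → PUnit → ℝ) (hcc : ∀ a l l', cc a l l' = c' s(a.1, a.2))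
    (phi : (V → PUnit → ℝ) → (Sym2 V → ℝ) → ℝ)
    (hphi : ∀ x y, phi x y =
      (∑ v, ∑ l, c v l * x v l)
      + (∑ a ∈ A, ∑ l, ∑ l', cj a l l' * x a.1 l * x a.2 l' * (1 - y s(a.1, a.2)))
      + (∑ a ∈ A, ∑ l, ∑ l', cc a l l' * x a.1 l * x a.2 l' * y s(a.1, a.2)))
    (y : Sym2 V → ℝ) (hy01 : ∀ e ∈ Ep, y e = 0 ∨ y e = 1) :
    (y ∈ Y ∧ ∀ y' ∈ Y, ∑ e ∈ Ep, c' e * y e ≤ ∑ e ∈ Ep, c' e * y' e) ↔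
      (y ∈ Y ∧ (fun _ _ => (1 : ℝ)) ∈ X ∧
        ∀ x' ∈ X, ∀ y' ∈ Y, phi (fun _ _ => 1) y ≤ phi x' y') := by
  have key : ∀ (f : Sym2 V → ℝ), ∑ a ∈ A, f s(a.1, a.2) = ∑ e ∈ Ep, f e := by
    intro f
    refine Finset.sum_bij (fun a _ => s(a.1, a.2)) ?_ ?_ ?_ ?_
    · intro a ha; exact (hA1 a.1 a.2).2 (Or.inl (by simpa using ha))
    · intro a ha b hb h
      rw [Sym2.eq_iff] at h
      rcases h with ⟨h1, h2⟩ | ⟨h1, h2⟩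
      · exact Prod.ext h1 h2
      · by_cases hab : a = b
        · exact hab
        · exfalso
          rcases Prod.mk.injEq .. ▸ rfl with _
          have hb' : (b.1, b.2) ∈ A := by simpa using hb
          have ha' : (b.2, b.1) ∈ A := by
            have : a = (b.2, b.1) := Prod.ext h1 h2
            simpa [this] using ha
          exact hA2 b.1 b.2 ⟨hb', ha'⟩
    · intro e he
      induction e using Sym2.inductionOn with
      | hf v w =>
        rcases (hA1 v w).1 he with h | h
        · exact ⟨(v, w), h, rfl⟩
        · exact ⟨(w, v), h, Sym2.eq_swap⟩
    · intro a ha; rfl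
  have oneX : (fun _ _ => (1 : ℝ)) ∈ X := by
    rw [hX]; exact ⟨fun v l => Or.inr rfl, fun v => by simp⟩
  have phx : ∀ x' ∈ X, ∀ v (l : PUnit), x' v l = 1 := by
    intro x' hx' v l
    rw [hX] at hx'
    have := hx'.2 v
    simpa [show l = PUnit.unit from rfl] using this
  have hval : ∀ x' ∈ X, ∀ y', phi x' y' = ∑ e ∈ Ep, c' e * y' e := by
    intro x' hx' y'
    rw [hphi, ← key (fun e => c' e * y' e)]
    simp [hc, hcj, hcc, phx x' hx']
  constructor
  · rintro ⟨hyY, hmin⟩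
    refine ⟨hyY, oneX, fun x' hx' y' hy' => ?_⟩
    rw [hval _ oneX, hval _ hx']
    exact hmin y' hy'
  · rintro ⟨hyY, -, hmin⟩
    refine ⟨hyY, fun y' hy' => ?_⟩
    have := hmin _ oneX y' hy'
    rwa [hval _ oneX, hval _ oneX] at this
end

section
/- Consider the NL-LMP with L = {ε} ∪ L₀ (ε a special background label) and costs satisfying, for all arcs (v,w) ∈ A and all l ∈ L₀: c^∼_{vw,lε} = c^∼_{vw,εl} = c* and c^∼_{vw,εε} = c†, with c* and c† each exceeding the sum of absolute values of all remaining cost coefficients, and c^≁_{vw,lε} = c^≁_{vw,εl} = 0. Then in any optimal solution (x,y), every node labeled ε lies in a singleton component, provided the finest decomposition (all components singletons) combined with any labeling is feasible. -/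
open Finset

set_option maxHeartbeats 1600000 in
/-- with a background label `ε` (here `none : Option L₀`), huge costs
`c*` for joining inactive with active nodes, huge cost `c†` for joining two inactive
nodes, and zero cost for cutting inactive from active nodes, every node labeled `ε`
in an optimal solution lies in a singleton component. -/
theorem stmt15 (V L₀ : Type) [Fintype V] [Fintype L₀] [DecidableEq V] [DecidableEq L₀]
    (G : SimpleGraph V) (hG : G.Connected)
    (Ep : Finset (Sym2 V)) (hE : G.edgeSet ⊆ ↑Ep)
    (A : Finset (V × V))
    (hA1 : ∀ u u' : V, s(u, u') ∈ Ep ↔ ((u, u') ∈ A ∨ (u', u) ∈ A))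
    (hA2 : ∀ u u' : V, ¬((u, u') ∈ A ∧ (u', u) ∈ A))
    (hA3 : ∀ a ∈ A, a.1 ≠ a.2)
    (c : V → Option L₀ → ℝ) (cj cc : V × V → Option L₀ → Option L₀ → ℝ)
    (cstar cdag : ℝ)
    (hcj1 : ∀ a ∈ A, ∀ l : L₀, cj a (some l) none = cstar ∧ cj a none (some l) = cstar)
    (hcj2 : ∀ a ∈ A, cj a none none = cdag)
    (hcc0 : ∀ a ∈ A, ∀ l : L₀, cc a (some l) none = 0 ∧ cc a none (some l) = 0)
    (hbig : ∀ cbig ∈ ({cstar, cdag} : Set ℝ), cbig >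
      (∑ u, ∑ m, |c u m|)
      + (∑ a ∈ A, ∑ m, ∑ m', if m.isSome ∧ m'.isSome then |cj a m m'| else 0)
      + (∑ a ∈ A, ∑ m, ∑ m', if (m.isSome ∧ m'.isSome) ∨ (m = none ∧ m' = none)
          then |cc a m m'| else 0))
    (X : Set (V → Option L₀ → ℝ))
    (hX : X = {x | (∀ u m, x u m = 0 ∨ x u m = 1) ∧ ∀ u, ∑ m, x u m = 1})
    (Y : Set (Sym2 V → ℝ))
    (hY : Y = {y | (∀ e ∈ Ep, y e = 0 ∨ y e = 1) ∧
      (∀ (u : V) (cw : G.Walk u u), cw.IsCycle →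
        ∀ e ∈ cw.edges, y e ≤ ((cw.edges.erase e).map y).sum) ∧
      (∀ u u' : V, s(u, u') ∈ Ep → s(u, u') ∉ G.edgeSet →
        ∀ p : G.Walk u u', p.IsPath → y s(u, u') ≤ (p.edges.map y).sum) ∧
      (∀ u u' : V, s(u, u') ∈ Ep → s(u, u') ∉ G.edgeSet →
        ∀ C : Finset (Sym2 V), ↑C ⊆ G.edgeSet →
          (∀ p : G.Walk u u', ∃ e ∈ p.edges, e ∈ C) →
          1 - y s(u, u') ≤ ∑ e ∈ C, (1 - y e))})
    (hfine : (fun _ : Sym2 V => (1 : ℝ)) ∈ Y)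
    (phi : (V → Option L₀ → ℝ) → (Sym2 V → ℝ) → ℝ)
    (hphi : ∀ x y, phi x y =
      (∑ u, ∑ m, c u m * x u m)
      + (∑ a ∈ A, ∑ m, ∑ m', cj a m m' * x a.1 m * x a.2 m' * (1 - y s(a.1, a.2)))
      + (∑ a ∈ A, ∑ m, ∑ m', cc a m m' * x a.1 m * x a.2 m' * y s(a.1, a.2)))
    (x : V → Option L₀ → ℝ) (y : Sym2 V → ℝ)
    (hfeas : x ∈ X ∧ y ∈ Y)
    (hopt : ∀ x' ∈ X, ∀ y' ∈ Y, phi x y ≤ phi x' y') :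
    ∀ v : V, x v none = 1 → ∀ w : V, G.Adj v w → y s(v, w) = 1 := by

  obtain ⟨hxX, hyY⟩ := hfeas
  rw [hX] at hxX
  obtain ⟨x01, xsum⟩ := hxX
  rw [hY] at hyY
  have y01 : ∀ e ∈ Ep, y e = 0 ∨ y e = 1 := hyY.1
  have x0le : ∀ u m, 0 ≤ x u m := by
    intro u m; rcases x01 u m with h | h <;> rw [h] <;> norm_num
  have x1le : ∀ u m, x u m ≤ 1 := by
    intro u m; rcases x01 u m with h | h <;> rw [h] <;> norm_num
  have hx1 : ∀ u, ∃ m, x u m = 1 := by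
    intro u
    by_contra hcon
    push_neg at hcon
    have h0 : ∑ m, x u m = 0 :=
      Finset.sum_eq_zero fun m _ => (x01 u m).resolve_right (hcon m)
    rw [xsum u] at h0; norm_num at h0
  have hxu : ∀ u m m', x u m = 1 → m' ≠ m → x u m' = 0 := by
    intro u m m' hm hne
    rcases x01 u m' with h | h
    · exact h
    · exfalso
      have h2 : x u m + x u m' ≤ ∑ m'', x u m'' := by
        rw [← Finset.sum_pair (Ne.symm hne)]
        exact Finset.sum_le_sum_of_subset_of_nonneg (Finset.subset_univ _)
          (fun i _ _ => x0le u i)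
      rw [xsum u, hm, h] at h2; norm_num at h2
  have hScnn : (0:ℝ) ≤ ∑ u, ∑ m, |c u m| := by positivity
  have hitej : ∀ (a : V × V) (m m' : Option L₀),
      (0:ℝ) ≤ (if m.isSome ∧ m'.isSome then |cj a m m'| else 0) := by
    intro a m m'; split
    · exact abs_nonneg _
    · exact le_rfl
  have hitec : ∀ (a : V × V) (m m' : Option L₀),
      (0:ℝ) ≤ (if (m.isSome ∧ m'.isSome) ∨ (m = none ∧ m' = none) then |cc a m m'| else 0) := by
    intro a m m'; split
    · exact abs_nonneg _
    · exact le_rfl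
  have hSJnn : (0:ℝ) ≤ ∑ a ∈ A, ∑ m, ∑ m', if m.isSome ∧ m'.isSome then |cj a m m'| else 0 :=
    Finset.sum_nonneg fun a _ => Finset.sum_nonneg fun m _ =>
      Finset.sum_nonneg fun m' _ => hitej a m m'
  have hbc : ∀ a : V × V, |cc a none none| ≤
      ∑ m, ∑ m', if (m.isSome ∧ m'.isSome) ∨ (m = none ∧ m' = none) then |cc a m m'| else 0 := by
    intro a
    have h1 : |cc a none none| ≤ ∑ m', if (((none : Option L₀)).isSome ∧ m'.isSome) ∨
        ((none : Option L₀) = none ∧ m' = none) then |cc a none m'| else 0 := by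
      have h2 := Finset.single_le_sum (f := fun m' => if (((none : Option L₀)).isSome ∧ m'.isSome) ∨
          ((none : Option L₀) = none ∧ m' = none) then |cc a none m'| else 0)
        (fun m' _ => hitec a none m') (Finset.mem_univ (none : Option L₀))
      simpa using h2
    refine le_trans h1 ?_
    exact Finset.single_le_sum (f := fun m => ∑ m', if (m.isSome ∧ m'.isSome) ∨
        (m = none ∧ m' = none) then |cc a m m'| else 0)
      (fun m _ => Finset.sum_nonneg fun m' _ => hitec a m m') (Finset.mem_univ none)
  have hccSC : ∀ a ∈ A, |cc a none none| ≤
      ∑ a ∈ A, ∑ m, ∑ m', if (m.isSome ∧ m'.isSome) ∨ (m = none ∧ m' = none)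
        then |cc a m m'| else 0 := by
    intro a ha
    have h2 : (∑ m, ∑ m', if (m.isSome ∧ m'.isSome) ∨ (m = none ∧ m' = none)
          then |cc a m m'| else 0)
        ≤ ∑ b ∈ A, ∑ m, ∑ m', if (m.isSome ∧ m'.isSome) ∨ (m = none ∧ m' = none)
          then |cc b m m'| else 0 :=
      Finset.single_le_sum
        (fun b _ => Finset.sum_nonneg fun m _ => Finset.sum_nonneg fun m' _ => hitec b m m') ha
    exact le_trans (hbc a) h2
  have hcstar := hbig cstar (Set.mem_insert _ _)
  have hcdag := hbig cdag (Set.mem_insert_of_mem _ rfl)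
  have hSCnn : (0:ℝ) ≤ ∑ a ∈ A, ∑ m, ∑ m', if (m.isSome ∧ m'.isSome) ∨ (m = none ∧ m' = none)
      then |cc a m m'| else 0 :=
    Finset.sum_nonneg fun a _ => Finset.sum_nonneg fun m _ =>
      Finset.sum_nonneg fun m' _ => hitec a m m'
  have hcstar0 : 0 ≤ cstar := by linarith
  have hred : ∀ (u1 u2 : V) (l1 l2 : Option L₀) (g : Option L₀ → Option L₀ → ℝ),
      x u1 l1 = 1 → x u2 l2 = 1 →
      (∑ m, ∑ m', g m m' * x u1 m * x u2 m') = g l1 l2 := by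
    intro u1 u2 l1 l2 g h1 h2
    rw [Finset.sum_eq_single l1]
    · rw [Finset.sum_eq_single l2]
      · rw [h1, h2]; ring
      · intro b _ hb; rw [hxu u2 l2 b h2 hb]; ring
      · intro hn; exact absurd (Finset.mem_univ _) hn
    · intro b _ hb
      refine Finset.sum_eq_zero fun m' _ => ?_
      rw [hxu u1 l1 b h1 hb]; ring
    · intro hn; exact absurd (Finset.mem_univ _) hn
  have htb : ∀ a ∈ A, ∀ m m' : Option L₀,
      -((if m.isSome ∧ m'.isSome then |cj a m m'| else 0) +
        (if (m.isSome ∧ m'.isSome) ∨ (m = none ∧ m' = none) then |cc a m m'| else 0)) ≤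
      (cj a m m' - cc a m m') * x a.1 m * x a.2 m' * (1 - y s(a.1, a.2)) := by
    intro a ha m m'
    have hmemE : s(a.1, a.2) ∈ Ep := (hA1 a.1 a.2).mpr (Or.inl (by simpa using ha))
    have hyA : 0 ≤ 1 - y s(a.1, a.2) ∧ 1 - y s(a.1, a.2) ≤ 1 := by
      rcases y01 _ hmemE with h | h <;> rw [h] <;> norm_num
    have hq0 : 0 ≤ x a.1 m * x a.2 m' * (1 - y s(a.1, a.2)) :=
      mul_nonneg (mul_nonneg (x0le _ _) (x0le _ _)) hyA.1
    have hq1 : x a.1 m * x a.2 m' * (1 - y s(a.1, a.2)) ≤ 1 := by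
      have h1 : x a.1 m * x a.2 m' ≤ 1 :=
        mul_le_one₀ (x1le a.1 m) (x0le a.2 m') (x1le a.2 m')
      have h2 : 0 ≤ x a.1 m * x a.2 m' := mul_nonneg (x0le _ _) (x0le _ _)
      nlinarith [hyA.1, hyA.2]
    match m, m' with
    | some l, some l' =>
      simp only [Option.isSome_some, and_self, if_true, true_or, ite_true]
      nlinarith [hq0, hq1, neg_abs_le (cj a (some l) (some l')),
        le_abs_self (cc a (some l) (some l')), abs_nonneg (cj a (some l) (some l')),
        abs_nonneg (cc a (some l) (some l'))]
    | some l, none =>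
      simp only [Option.isSome_some, Option.isSome_none, Bool.false_eq_true, and_false,
        reduceCtorEq, false_and, or_self, ite_false, if_false]
      rw [(hcj1 a ha l).1, (hcc0 a ha l).1]
      nlinarith [mul_nonneg hcstar0 hq0]
    | none, some l =>
      simp only [Option.isSome_some, Option.isSome_none, Bool.false_eq_true, and_true,
        false_and, and_false, reduceCtorEq, or_self, ite_false, if_false]
      rw [(hcj1 a ha l).2, (hcc0 a ha l).2]
      nlinarith [mul_nonneg hcstar0 hq0]
    | none, none =>
      simp only [Option.isSome_none, Bool.false_eq_true, false_and, and_self, or_true,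
        false_or, ite_false, ite_true, if_false, if_true]
      rw [hcj2 a ha]
      have h0 : 0 ≤ cdag - cc a none none := by
        have h1 := hccSC a ha
        have h2 := le_abs_self (cc a none none)
        linarith
      nlinarith [mul_nonneg h0 hq0, abs_nonneg (cc a none none)]
  have hFB : ∀ a ∈ A,
      -((∑ m, ∑ m', if m.isSome ∧ m'.isSome then |cj a m m'| else 0) +
        (∑ m, ∑ m', if (m.isSome ∧ m'.isSome) ∨ (m = none ∧ m' = none)
          then |cc a m m'| else 0))
      ≤ ∑ m, ∑ m', (cj a m m' - cc a m m') * x a.1 m * x a.2 m' * (1 - y s(a.1, a.2)) := by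
    intro a ha
    have h1 : (∑ m, ∑ m', -((if m.isSome ∧ m'.isSome then |cj a m m'| else 0) +
          (if (m.isSome ∧ m'.isSome) ∨ (m = none ∧ m' = none) then |cc a m m'| else 0)))
        ≤ ∑ m, ∑ m', (cj a m m' - cc a m m') * x a.1 m * x a.2 m' * (1 - y s(a.1, a.2)) :=
      Finset.sum_le_sum fun m _ => Finset.sum_le_sum fun m' _ => htb a ha m m'
    refine le_trans (le_of_eq ?_) h1
    simp [neg_add, Finset.sum_add_distrib]
  have hkey : phi x y - phi x (fun _ => 1) =
      ∑ a ∈ A, ∑ m, ∑ m', (cj a m m' - cc a m m') * x a.1 m * x a.2 m' *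
        (1 - y s(a.1, a.2)) := by
    rw [hphi, hphi]
    have hsplit : ∀ n j cy j1 c1 : ℝ,
        n + j + cy - (n + j1 + c1) = (j - j1) + (cy - c1) := by intros; ring
    rw [hsplit]
    rw [← Finset.sum_sub_distrib, ← Finset.sum_sub_distrib, ← Finset.sum_add_distrib]
    refine Finset.sum_congr rfl fun a _ => ?_
    rw [← Finset.sum_sub_distrib, ← Finset.sum_sub_distrib, ← Finset.sum_add_distrib]
    refine Finset.sum_congr rfl fun m _ => ?_
    rw [← Finset.sum_sub_distrib, ← Finset.sum_sub_distrib, ← Finset.sum_add_distrib]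
    refine Finset.sum_congr rfl fun m' _ => ?_
    ring
  have hD0 : phi x y - phi x (fun _ => 1) ≤ 0 := by
    have h := hopt x (by rw [hX]; exact ⟨x01, xsum⟩) (fun _ => 1) hfine
    linarith
  intro v hv w hvw
  by_contra hy1
  have hEdge : s(v, w) ∈ Ep := hE (G.mem_edgeSet.mpr hvw)
  have hy0 : y s(v, w) = 0 := (y01 _ hEdge).resolve_right hy1
  have main : ∀ a0 ∈ A, s(a0.1, a0.2) = s(v, w) →
      (x a0.1 none = 1 ∨ x a0.2 none = 1) → False := by
    intro a0 ha0 he hnone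
    obtain ⟨l1, hl1⟩ := hx1 a0.1
    obtain ⟨l2, hl2⟩ := hx1 a0.2
    have hF : (∑ m, ∑ m', (cj a0 m m' - cc a0 m m') * x a0.1 m * x a0.2 m' *
          (1 - y s(a0.1, a0.2))) = cj a0 l1 l2 - cc a0 l1 l2 := by
      rw [he, hy0]
      simp only [sub_zero, mul_one]
      exact hred a0.1 a0.2 l1 l2 (fun m m' => cj a0 m m' - cc a0 m m') hl1 hl2
    have hlab : ∀ (u : V), x u none = 1 → ∀ l, x u l = 1 → l = none := by
      intro u hu l hl
      by_contra hne
      rw [hxu u none l hu hne] at hl; norm_num at hl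
    have hcase : ∃ cb ∈ ({cstar, cdag} : Set ℝ),
        cb ≤ (cj a0 l1 l2 - cc a0 l1 l2) + |cc a0 none none| := by
      rcases hnone with h | h
      · have h1 : l1 = none := hlab a0.1 h l1 hl1
        subst h1
        cases l2 with
        | none =>
          refine ⟨cdag, Set.mem_insert_of_mem _ rfl, ?_⟩
          rw [hcj2 a0 ha0]
          have h2 := le_abs_self (cc a0 none none); linarith
        | some l =>
          refine ⟨cstar, Set.mem_insert _ _, ?_⟩
          rw [(hcj1 a0 ha0 l).2, (hcc0 a0 ha0 l).2]
          have h2 := abs_nonneg (cc a0 none none); linarith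
      · have h1 : l2 = none := hlab a0.2 h l2 hl2
        subst h1
        cases l1 with
        | none =>
          refine ⟨cdag, Set.mem_insert_of_mem _ rfl, ?_⟩
          rw [hcj2 a0 ha0]
          have h2 := le_abs_self (cc a0 none none); linarith
        | some l =>
          refine ⟨cstar, Set.mem_insert _ _, ?_⟩
          rw [(hcj1 a0 ha0 l).1, (hcc0 a0 ha0 l).1]
          have h2 := abs_nonneg (cc a0 none none); linarith
    obtain ⟨cb, hcbmem, hcb⟩ := hcase
    have hcbig := hbig cb hcbmem
    have hsplitA : (∑ a ∈ A, ∑ m, ∑ m', (cj a m m' - cc a m m') * x a.1 m * x a.2 m' *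
          (1 - y s(a.1, a.2)))
        = (∑ m, ∑ m', (cj a0 m m' - cc a0 m m') * x a0.1 m * x a0.2 m' *
            (1 - y s(a0.1, a0.2)))
          + ∑ a ∈ A.erase a0, ∑ m, ∑ m', (cj a m m' - cc a m m') * x a.1 m * x a.2 m' *
            (1 - y s(a.1, a.2)) :=
      (Finset.add_sum_erase A _ ha0).symm
    have hBsplit : (∑ a ∈ A.erase a0,
          ((∑ m, ∑ m', if m.isSome ∧ m'.isSome then |cj a m m'| else 0) +
           (∑ m, ∑ m', if (m.isSome ∧ m'.isSome) ∨ (m = none ∧ m' = none)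
             then |cc a m m'| else 0)))
        = (∑ a ∈ A,
          ((∑ m, ∑ m', if m.isSome ∧ m'.isSome then |cj a m m'| else 0) +
           (∑ m, ∑ m', if (m.isSome ∧ m'.isSome) ∨ (m = none ∧ m' = none)
             then |cc a m m'| else 0)))
          - ((∑ m, ∑ m', if m.isSome ∧ m'.isSome then |cj a0 m m'| else 0) +
             (∑ m, ∑ m', if (m.isSome ∧ m'.isSome) ∨ (m = none ∧ m' = none)
               then |cc a0 m m'| else 0)) :=
      Finset.sum_erase_eq_sub ha0
    have hBsum : (∑ a ∈ A,
          ((∑ m, ∑ m', if m.isSome ∧ m'.isSome then |cj a m m'| else 0) +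
           (∑ m, ∑ m', if (m.isSome ∧ m'.isSome) ∨ (m = none ∧ m' = none)
             then |cc a m m'| else 0)))
        = (∑ a ∈ A, ∑ m, ∑ m', if m.isSome ∧ m'.isSome then |cj a m m'| else 0)
          + (∑ a ∈ A, ∑ m, ∑ m', if (m.isSome ∧ m'.isSome) ∨ (m = none ∧ m' = none)
              then |cc a m m'| else 0) :=
      Finset.sum_add_distrib
    have hFer : -(∑ a ∈ A.erase a0,
          ((∑ m, ∑ m', if m.isSome ∧ m'.isSome then |cj a m m'| else 0) +
           (∑ m, ∑ m', if (m.isSome ∧ m'.isSome) ∨ (m = none ∧ m' = none)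
             then |cc a m m'| else 0)))
        ≤ ∑ a ∈ A.erase a0, ∑ m, ∑ m', (cj a m m' - cc a m m') * x a.1 m * x a.2 m' *
            (1 - y s(a.1, a.2)) := by
      have h1 := Finset.sum_le_sum
        (fun a (ha : a ∈ A.erase a0) => hFB a (Finset.mem_of_mem_erase ha))
      refine le_trans (le_of_eq ?_) h1
      rw [Finset.sum_neg_distrib]
    have hB0j : (0:ℝ) ≤ ∑ m, ∑ m', if m.isSome ∧ m'.isSome then |cj a0 m m'| else 0 :=
      Finset.sum_nonneg fun m _ => Finset.sum_nonneg fun m' _ => hitej a0 m m'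
    have hB0c := hbc a0
    linarith [hkey, hsplitA, hF, hcb, hFer, hBsplit, hBsum, hB0j, hB0c, hcbig, hScnn, hD0]
  rcases (hA1 v w).mp hEdge with ha | ha
  · exact main (v, w) ha rfl (Or.inl hv)
  · exact main (w, v) ha (Sym2.eq_swap) (Or.inr hv)
end
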